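/- Let X₁ be a Rademacher random variable and X₂ an exponential random variable with rate 1, independent of X₁. Let X̂ = (X₁ + X₂)/√2, F_X̂ the cumulative distribution function of X̂, and Ŷ = F_X̂(X̂). Then E[X₂·Ŷ] = (3e^{−2} + 5)/8. -/

import Mathlib

open MeasureTheory ProbabilityTheory
open scoped NNReal ENNReal
open Real Set Filter Topology

/-- `G` is the cumulative distribution function of the exponential distribution with
rate 1: `G(z) = 1 - exp(-z)` for `z ≥ 0` and `G(z) = 0` for `z < 0`. -/
noncomputable def G (z : ℝ) : ℝ := if 0 ≤ z then 1 - Real.exp (-z) else 0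


lemma G_nonneg (z : ℝ) : 0 ≤ G z := by
  unfold G; split_ifs with h
  · simp only [sub_nonneg, Real.exp_le_one_iff]; linarith
  · exact le_rfl

lemma G_le_one (z : ℝ) : G z ≤ 1 := by
  unfold G; split_ifs with h
  · have := Real.exp_pos (-z); linarith
  · norm_num

lemma G_measurable : Measurable G := by
  unfold G
  exact Measurable.ite measurableSet_Ici
    (measurable_const.sub (Real.measurable_exp.comp measurable_neg)) measurable_const

lemma G_of_nonneg {z : ℝ} (h : 0 ≤ z) : G z = 1 - Real.exp (-z) := if_pos h

lemma G_of_nonpos {z : ℝ} (h : z ≤ 0) : G z = 0 := by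
  unfold G; split_ifs with h'
  · have : z = 0 := le_antisymm h h'
    simp [this]
  · rfl



lemma intA {c : ℝ} (hc : 0 < c) (a : ℝ) (ha : 0 ≤ a) :
    ∫ t in Ioi a, t * Real.exp (-(c*t)) = (a/c + 1/c^2) * Real.exp (-(c*a)) := by
  have hderiv : ∀ x ∈ Ici a, HasDerivAt (fun t => -(t/c + 1/c^2) * Real.exp (-(c*t)))
      (x * Real.exp (-(c*x))) x := by
    intro x _
    have h1 : HasDerivAt (fun t : ℝ => -(t/c + 1/c^2)) (-(1/c)) x := by
      have h0 : HasDerivAt (fun t : ℝ => t/c + 1/c^2) (1/c) x := by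
        exact ((hasDerivAt_id x).div_const c).add_const (1/c^2)
      exact h0.neg
    have h2 : HasDerivAt (fun t : ℝ => Real.exp (-(c*t))) (-c * Real.exp (-(c*x))) x := by
      have : HasDerivAt (fun t : ℝ => -(c*t)) (-c) x := by
        simpa [Pi.neg_def] using ((hasDerivAt_id x).const_mul c).neg
      simpa [mul_comm] using this.exp
    refine (h1.mul h2).congr_deriv ?_
    field_simp
    ring
  have hpos : ∀ x ∈ Ioi a, 0 ≤ x * Real.exp (-(c*x)) := fun x hx =>
    mul_nonneg (le_trans ha (le_of_lt hx)) (Real.exp_pos _).le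
  have htend : Tendsto (fun t => -(t/c + 1/c^2) * Real.exp (-(c*t))) atTop (𝓝 0) := by
    have hct : Tendsto (fun t : ℝ => c*t) atTop atTop :=
      Tendsto.const_mul_atTop hc tendsto_id
    have h3 : Tendsto (fun t : ℝ => (c*t) * Real.exp (-(c*t))) atTop (𝓝 0) := by
      simpa [Function.comp_def] using (Real.tendsto_pow_mul_exp_neg_atTop_nhds_zero 1).comp hct
    have h4 : Tendsto (fun t : ℝ => Real.exp (-(c*t))) atTop (𝓝 0) :=
      Real.tendsto_exp_neg_atTop_nhds_zero.comp hct
    have := ((h3.const_mul (1/c^2 : ℝ)).add (h4.const_mul (1/c^2))).neg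
    simp only [mul_zero, add_zero, neg_zero, zero_add] at this
    refine this.congr fun t => ?_
    field_simp
  have := integral_Ioi_of_hasDerivAt_of_nonneg' hderiv hpos htend
  rw [this]
  ring

lemma intA' {c : ℝ} (hc : 0 < c) (a : ℝ) (ha : 0 ≤ a) :
    IntegrableOn (fun t => t * Real.exp (-(c*t))) (Ioi a) := by
  have hderiv : ∀ x ∈ Ici a, HasDerivAt (fun t => -(t/c + 1/c^2) * Real.exp (-(c*t)))
      (x * Real.exp (-(c*x))) x := by
    intro x _
    have h1 : HasDerivAt (fun t : ℝ => -(t/c + 1/c^2)) (-(1/c)) x := by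
      have h0 : HasDerivAt (fun t : ℝ => t/c + 1/c^2) (1/c) x := by
        exact ((hasDerivAt_id x).div_const c).add_const (1/c^2)
      exact h0.neg
    have h2 : HasDerivAt (fun t : ℝ => Real.exp (-(c*t))) (-c * Real.exp (-(c*x))) x := by
      have : HasDerivAt (fun t : ℝ => -(c*t)) (-c) x := by
        simpa [Pi.neg_def] using ((hasDerivAt_id x).const_mul c).neg
      simpa [mul_comm] using this.exp
    refine (h1.mul h2).congr_deriv ?_
    field_simp
    ring
  have hpos : ∀ x ∈ Ioi a, 0 ≤ x * Real.exp (-(c*x)) := fun x hx =>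
    mul_nonneg (le_trans ha (le_of_lt hx)) (Real.exp_pos _).le
  have htend : Tendsto (fun t => -(t/c + 1/c^2) * Real.exp (-(c*t))) atTop (𝓝 0) := by
    have hct : Tendsto (fun t : ℝ => c*t) atTop atTop :=
      Tendsto.const_mul_atTop hc tendsto_id
    have h3 : Tendsto (fun t : ℝ => (c*t) * Real.exp (-(c*t))) atTop (𝓝 0) := by
      simpa [Function.comp_def] using (Real.tendsto_pow_mul_exp_neg_atTop_nhds_zero 1).comp hct
    have h4 : Tendsto (fun t : ℝ => Real.exp (-(c*t))) atTop (𝓝 0) :=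
      Real.tendsto_exp_neg_atTop_nhds_zero.comp hct
    have := ((h3.const_mul (1/c^2 : ℝ)).add (h4.const_mul (1/c^2))).neg
    simp only [mul_zero, add_zero, neg_zero, zero_add] at this
    refine this.congr fun t => ?_
    field_simp
  exact integrableOn_Ioi_deriv_of_nonneg' hderiv hpos htend


lemma EG (s : ℝ) (hs : 0 ≤ s) :
    ∫ b in Ioi 0, Real.exp (-b) * (b * G (b + s)) = 1 - Real.exp (-s)/4 := by
  have hcong : EqOn (fun b => Real.exp (-b) * (b * G (b + s)))
      (fun b => b * Real.exp (-(1*b)) - Real.exp (-s) * (b * Real.exp (-(2*b)))) (Ioi 0) := by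
    intro b hb
    have hb0 : (0:ℝ) < b := hb
    have h2 : Real.exp (-(2*b)) = Real.exp (-b) * Real.exp (-b) := by
      rw [← Real.exp_add]; ring_nf
    have h3 : Real.exp (-(b+s)) = Real.exp (-b) * Real.exp (-s) := by
      rw [← Real.exp_add]; ring_nf
    simp only [G_of_nonneg (by linarith : (0:ℝ) ≤ b + s), h2, h3, one_mul]
    ring
  rw [setIntegral_congr_fun measurableSet_Ioi hcong,
    integral_sub (intA' one_pos 0 le_rfl) ((intA' two_pos 0 le_rfl).const_mul _),
    integral_const_mul, intA one_pos 0 le_rfl, intA two_pos 0 le_rfl]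
  norm_num
  ring

lemma EGneg : ∫ b in Ioi 0, Real.exp (-b) * (b * G (b - 2)) = 7/4 * Real.exp (-2) := by
  have hu : Ioc (0:ℝ) 2 ∪ Ioi 2 = Ioi (0:ℝ) := Ioc_union_Ioi_eq_Ioi (by norm_num)
  have hz : EqOn (fun b => Real.exp (-b) * (b * G (b - 2))) (fun _ => (0:ℝ)) (Ioc 0 2) := by
    intro b hb
    simp [G_of_nonpos (by linarith [hb.2] : b - 2 ≤ 0)]
  have hcong : EqOn (fun b => Real.exp (-b) * (b * G (b - 2)))
      (fun b => b * Real.exp (-(1*b)) - Real.exp 2 * (b * Real.exp (-(2*b)))) (Ioi 2) := by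
    intro b hb
    have hb2 : (2:ℝ) < b := hb
    have h2 : Real.exp 2 * Real.exp (-(2*b)) = Real.exp (-(b-2)) * Real.exp (-b) := by
      rw [← Real.exp_add, ← Real.exp_add]; ring_nf
    simp only [G_of_nonneg (by linarith : (0:ℝ) ≤ b - 2), one_mul]
    nlinarith [h2]
  have hi1 : IntegrableOn (fun b => Real.exp (-b) * (b * G (b - 2))) (Ioc 0 2) :=
    integrableOn_zero.congr_fun hz.symm measurableSet_Ioc
  have hi2 : IntegrableOn (fun b => Real.exp (-b) * (b * G (b - 2))) (Ioi 2) :=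
    IntegrableOn.congr_fun ((intA' one_pos 2 (by norm_num)).sub
      ((intA' two_pos 2 (by norm_num)).const_mul (Real.exp 2))) hcong.symm measurableSet_Ioi
  rw [← hu, setIntegral_union Ioc_disjoint_Ioi_same measurableSet_Ioi hi1 hi2,
    setIntegral_congr_fun measurableSet_Ioc hz, integral_zero,
    setIntegral_congr_fun measurableSet_Ioi hcong,
    integral_sub (intA' one_pos 2 (by norm_num)) ((intA' two_pos 2 (by norm_num)).const_mul _),
    integral_const_mul, intA one_pos 2 (by norm_num), intA two_pos 2 (by norm_num)]
  have h4 : Real.exp 2 * Real.exp (-(2*(2:ℝ))) = Real.exp (-2) := by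
    rw [← Real.exp_add]; norm_num
  have h1 : (-(1*(2:ℝ))) = -2 := by norm_num
  rw [h1]
  linear_combination (-5/4 : ℝ) * h4

lemma expMeasure_eq : expMeasure 1 = MeasureTheory.volume.withDensity (exponentialPDF 1) := rfl

lemma exponentialPDF_measurable : Measurable (exponentialPDF 1) :=
  (measurable_exponentialPDFReal 1).ennreal_ofReal

lemma intPhi {ψ : ℝ → ℝ} (hm : Measurable ψ) (h0 : ∀ b, 0 ≤ ψ b) (h1 : ∀ b, ψ b ≤ 1) :
    IntegrableOn (fun b => Real.exp (-b) * (b * ψ b)) (Ioi 0) := by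
  refine Integrable.mono' (intA' one_pos 0 le_rfl) ?_ ?_
  · exact ((Real.measurable_exp.comp measurable_neg).mul
      (measurable_id.mul hm)).aestronglyMeasurable
  · refine (ae_restrict_iff' measurableSet_Ioi).2 (ae_of_all _ fun b hb => ?_)
    have hb0 : (0:ℝ) < b := hb
    have habs : ‖Real.exp (-b) * (b * ψ b)‖ = Real.exp (-b) * (b * ψ b) := by
      rw [Real.norm_eq_abs]
      exact abs_of_nonneg (mul_nonneg (Real.exp_pos _).le (mul_nonneg hb0.le (h0 b)))
    rw [habs, one_mul]
    have h2 : b * ψ b ≤ b := mul_le_of_le_one_right hb0.le (h1 b)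
    nlinarith [Real.exp_pos (-b)]

lemma Jlemma {ψ : ℝ → ℝ} (hm : Measurable ψ) (h0 : ∀ b, 0 ≤ ψ b) (h1 : ∀ b, ψ b ≤ 1) :
    ∫⁻ b, ENNReal.ofReal (b * ψ b) ∂(expMeasure 1)
      = ENNReal.ofReal (∫ b in Ioi 0, Real.exp (-b) * (b * ψ b)) := by
  rw [expMeasure_eq, lintegral_withDensity_eq_lintegral_mul _ exponentialPDF_measurable
    (show Measurable fun b : ℝ => ENNReal.ofReal (b * ψ b) from
      (measurable_id.mul hm).ennreal_ofReal)]
  have heq : ∀ b : ℝ, (exponentialPDF 1 * fun b => ENNReal.ofReal (b * ψ b)) b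
      = Set.indicator (Ioi 0) (fun b => ENNReal.ofReal (Real.exp (-b) * (b * ψ b))) b := by
    intro b
    simp only [Pi.mul_apply, exponentialPDF_eq, one_mul]
    rcases lt_trichotomy b 0 with hb | hb | hb
    · rw [if_neg (not_le.2 hb), Set.indicator_of_notMem
        (by simp only [Set.mem_Ioi, not_lt]; exact hb.le)]
      simp
    · subst hb
      rw [Set.indicator_of_notMem (by simp)]
      simp
    · rw [if_pos hb.le, Set.indicator_of_mem (Set.mem_Ioi.2 hb), ← ENNReal.ofReal_mul (Real.exp_pos _).le]
  rw [lintegral_congr heq, lintegral_indicator measurableSet_Ioi,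
    ← ofReal_integral_eq_lintegral_ofReal (intPhi hm h0 h1)]
  exact (ae_restrict_iff' measurableSet_Ioi).2 (ae_of_all _ fun b hb =>
    mul_nonneg (Real.exp_pos _).le (mul_nonneg (le_of_lt hb) (h0 b)))

noncomputable def PHI (s : ℝ) : ℝ := (G (s - 1) + G (s + 1)) / 2

lemma PHI_measurable : Measurable PHI :=
  ((G_measurable.comp (measurable_id.sub_const 1)).add
    (G_measurable.comp (measurable_id.add_const 1))).div_const 2

lemma PHI_nonneg (s : ℝ) : 0 ≤ PHI s :=
  div_nonneg (add_nonneg (G_nonneg _) (G_nonneg _)) two_pos.le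

lemma PHI_le_one (s : ℝ) : PHI s ≤ 1 := by
  have h1 := G_le_one (s - 1); have h2 := G_le_one (s + 1)
  unfold PHI; linarith

lemma EG0 : ∫ b in Ioi 0, Real.exp (-b) * (b * G b) = 3/4 := by
  have h := EG 0 le_rfl
  simp only [add_zero, neg_zero, Real.exp_zero] at h
  rw [h]; norm_num

lemma R1 : ∫ b in Ioi 0, Real.exp (-b) * (b * PHI (1 + b)) = (3/4 + (1 - Real.exp (-2)/4))/2 := by
  have hcong : EqOn (fun b => Real.exp (-b) * (b * PHI (1 + b)))
      (fun b => (Real.exp (-b) * (b * G b) + Real.exp (-b) * (b * G (b + 2))) / 2) (Ioi 0) := by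
    intro b _
    unfold PHI
    have e1 : (1 + b - 1 : ℝ) = b := by ring
    have e2 : (1 + b + 1 : ℝ) = b + 2 := by ring
    simp only [e1, e2]; ring
  rw [setIntegral_congr_fun measurableSet_Ioi hcong, integral_div,
    integral_add (intPhi G_measurable G_nonneg G_le_one)
      (intPhi (ψ := fun b => G (b + 2)) (G_measurable.comp (measurable_id.add_const 2))
        (fun b => G_nonneg _) (fun b => G_le_one _)),
    EG0, EG 2 (by norm_num)]

lemma R2 : ∫ b in Ioi 0, Real.exp (-b) * (b * PHI (-1 + b)) = (7/4 * Real.exp (-2) + 3/4)/2 := by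
  have hcong : EqOn (fun b => Real.exp (-b) * (b * PHI (-1 + b)))
      (fun b => (Real.exp (-b) * (b * G (b - 2)) + Real.exp (-b) * (b * G b)) / 2) (Ioi 0) := by
    intro b _
    unfold PHI
    have e1 : (-1 + b - 1 : ℝ) = b - 2 := by ring
    have e2 : (-1 + b + 1 : ℝ) = b := by ring
    simp only [e1, e2]; ring
  rw [setIntegral_congr_fun measurableSet_Ioi hcong, integral_div,
    integral_add (intPhi (ψ := fun b => G (b - 2)) (G_measurable.comp (measurable_id.sub_const 2))
        (fun b => G_nonneg _) (fun b => G_le_one _))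
      (intPhi G_measurable G_nonneg G_le_one),
    EGneg, EG0]

lemma expMeasure_Iic (x : ℝ) : expMeasure 1 (Iic x) = ENNReal.ofReal (G x) := by
  rw [expMeasure_eq, withDensity_apply _ measurableSet_Iic,
    lintegral_exponentialPDF_eq_antiDeriv zero_lt_one]
  simp [G]

lemma expMeasure_Iio_zero : expMeasure 1 (Iio 0) = 0 := by
  rw [expMeasure_eq, withDensity_apply _ measurableSet_Iio]
  exact lintegral_exponentialPDF_of_nonpos le_rfl

/-- With `X₁` Rademacher, `X₂` exponential(1) independent of `X₁`, `X̂ = (X₁ + X₂)/√2` and `Ŷ = F_X̂(X̂)`, one has `E[X₂·Ŷ] = (3e⁻² + 5)/8`. -/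
theorem stmt_11 {Ω : Type*} [MeasurableSpace Ω] (μ : Measure Ω) [IsProbabilityMeasure μ]
    (X₁ X₂ : Ω → ℝ) (h1meas : Measurable X₁) (h2meas : Measurable X₂)
    (hX1 : μ.map X₁ = (1/2 : ℝ≥0∞) • Measure.dirac 1 + (1/2 : ℝ≥0∞) • Measure.dirac (-1))
    (hX2 : μ.map X₂ = expMeasure 1)
    (hind : IndepFun X₁ X₂ μ)
    (Xhat : Ω → ℝ) (hXhat : Xhat = fun ω => (X₁ ω + X₂ ω) / Real.sqrt 2)
    (Yhat : Ω → ℝ) (hYhat : Yhat = fun ω => cdf (μ.map Xhat) (Xhat ω)) :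
    ∫ ω, X₂ ω * Yhat ω ∂μ = (3 * Real.exp (-2) + 5) / 8 := by
  haveI hexp : IsProbabilityMeasure (expMeasure 1) := isProbabilityMeasure_expMeasure zero_lt_one
  have hXhm : Measurable Xhat := by rw [hXhat]; exact (h1meas.add h2meas).div_const _
  have hs2 : (0:ℝ) < Real.sqrt 2 := by positivity
  have hmap : μ.map (fun ω => (X₁ ω, X₂ ω)) = (μ.map X₁).prod (μ.map X₂) :=
    (indepFun_iff_map_prod_eq_prod_map_map h1meas.aemeasurable h2meas.aemeasurable).mp hind
  -- CDF of Xhat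
  have hcdf : ∀ x : ℝ, cdf (μ.map Xhat) x = PHI (Real.sqrt 2 * x) := by
    intro x
    haveI : IsProbabilityMeasure (μ.map Xhat) := Measure.isProbabilityMeasure_map hXhm.aemeasurable
    have hS : MeasurableSet {p : ℝ × ℝ | p.1 + p.2 ≤ Real.sqrt 2 * x} :=
      measurableSet_le (measurable_fst.add measurable_snd) measurable_const
    rw [cdf_eq_real, measureReal_def]
    have hpre : Xhat ⁻¹' (Iic x)
        = (fun ω => (X₁ ω, X₂ ω)) ⁻¹' {p : ℝ × ℝ | p.1 + p.2 ≤ Real.sqrt 2 * x} := by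
      ext ω
      simp only [Set.mem_preimage, Set.mem_Iic, Set.mem_setOf_eq, hXhat]
      rw [div_le_iff₀ hs2]
      constructor <;> intro h <;> nlinarith [h]
    rw [Measure.map_apply hXhm measurableSet_Iic, hpre,
      ← Measure.map_apply (h1meas.prodMk h2meas) hS, hmap, hX1, hX2,
      Measure.prod_apply hS]
    have hint : ∀ a : ℝ, (expMeasure 1) (Prod.mk a ⁻¹' {p : ℝ × ℝ | p.1 + p.2 ≤ Real.sqrt 2 * x})
        = ENNReal.ofReal (G (Real.sqrt 2 * x - a)) := by
      intro a
      have hpre2 : Prod.mk a ⁻¹' {p : ℝ × ℝ | p.1 + p.2 ≤ Real.sqrt 2 * x}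
          = Iic (Real.sqrt 2 * x - a) := by
        ext b
        simp only [Set.mem_preimage, Set.mem_setOf_eq, Set.mem_Iic]
        constructor <;> intro <;> linarith
      rw [hpre2, expMeasure_Iic]
    rw [lintegral_congr hint, lintegral_add_measure, lintegral_smul_measure,
      lintegral_smul_measure, lintegral_dirac, lintegral_dirac, smul_eq_mul, smul_eq_mul,
      ENNReal.toReal_add (ENNReal.mul_ne_top (by norm_num) ENNReal.ofReal_ne_top)
        (ENNReal.mul_ne_top (by norm_num) ENNReal.ofReal_ne_top),
      ENNReal.toReal_mul, ENNReal.toReal_mul,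
      ENNReal.toReal_ofReal (G_nonneg _), ENNReal.toReal_ofReal (G_nonneg _)]
    have h12 : ((1:ℝ≥0∞)/2).toReal = (1/2 : ℝ) := by simp
    rw [h12, show Real.sqrt 2 * x - -1 = Real.sqrt 2 * x + 1 by ring]
    unfold PHI
    ring
  -- Yhat in closed form
  have hY : Yhat = fun ω => PHI (X₁ ω + X₂ ω) := by
    funext ω
    simp only [hYhat, hcdf]
    simp only [hXhat]
    congr 1
    rw [mul_comm, div_mul_cancel₀ _ hs2.ne']
  -- a.e. nonnegativity of X₂
  have hX2nn : ∀ᵐ ω ∂μ, 0 ≤ X₂ ω := by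
    have h0 : μ (X₂ ⁻¹' (Iio 0)) = 0 := by
      rw [← Measure.map_apply h2meas measurableSet_Iio, hX2]
      exact expMeasure_Iio_zero
    rw [ae_iff]
    have hset : {ω | ¬ 0 ≤ X₂ ω} = X₂ ⁻¹' (Iio 0) := by ext ω; simp [not_le]
    rw [hset]; exact h0
  have hYm : Measurable Yhat := by rw [hY]; exact PHI_measurable.comp (h1meas.add h2meas)
  have hnn : 0 ≤ᵐ[μ] fun ω => X₂ ω * Yhat ω := by
    filter_upwards [hX2nn] with ω hω
    exact mul_nonneg hω (by rw [hY]; exact PHI_nonneg _)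
  rw [integral_eq_lintegral_of_nonneg_ae hnn (h2meas.mul hYm).aestronglyMeasurable]
  have hk : Measurable (fun p : ℝ × ℝ => ENNReal.ofReal (p.2 * PHI (p.1 + p.2))) :=
    (measurable_snd.mul (PHI_measurable.comp (measurable_fst.add measurable_snd))).ennreal_ofReal
  have step : ∫⁻ ω, ENNReal.ofReal (X₂ ω * Yhat ω) ∂μ
      = ∫⁻ p : ℝ × ℝ, ENNReal.ofReal (p.2 * PHI (p.1 + p.2))
          ∂((μ.map X₁).prod (μ.map X₂)) := by
    rw [← hmap, lintegral_map hk (h1meas.prodMk h2meas)]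
    exact lintegral_congr fun ω => by rw [hY]
  rw [step, hX1, hX2, lintegral_prod _ hk.aemeasurable, lintegral_add_measure,
    lintegral_smul_measure, lintegral_smul_measure, lintegral_dirac, lintegral_dirac,
    Jlemma (ψ := fun b => PHI (1 + b))
      (PHI_measurable.comp (measurable_const.add measurable_id))
      (fun b => PHI_nonneg _) (fun b => PHI_le_one _),
    Jlemma (ψ := fun b => PHI (-1 + b))
      (PHI_measurable.comp (measurable_const.add measurable_id))
      (fun b => PHI_nonneg _) (fun b => PHI_le_one _),
    R1, R2, smul_eq_mul, smul_eq_mul,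
    ENNReal.toReal_add (ENNReal.mul_ne_top (by norm_num) ENNReal.ofReal_ne_top)
      (ENNReal.mul_ne_top (by norm_num) ENNReal.ofReal_ne_top),
    ENNReal.toReal_mul, ENNReal.toReal_mul]
  have hE1 : Real.exp (-2) ≤ 1 := Real.exp_le_one_iff.mpr (by norm_num)
  have hE0 : (0:ℝ) < Real.exp (-2) := Real.exp_pos _
  rw [ENNReal.toReal_ofReal (by nlinarith), ENNReal.toReal_ofReal (by nlinarith)]
  have h12 : ((1:ℝ≥0∞)/2).toReal = (1/2 : ℝ) := by simp
  rw [h12]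
  ring
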